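/- arXiv:1512.03374 — 6 statements merged into one kernel-verified Lean document; each statement's English description precedes it below -/
import Mathlib

section
/- Let n ≥ 1 and let f : ℝⁿ → ℝ be differentiable on the open positive cone Γ₊, positively 1-homogeneous on Γ₊, and with all partial derivatives ∂ᵢf(κ) > 0 on Γ₊. Then for every κ ∈ Γ₊ and every symmetric real n×n matrix η one has f(κ) · ∑_{i,j} (∂ᵢf(κ)/κⱼ) ηᵢⱼ² ≥ (∑ᵢ ∂ᵢf(κ) ηᵢᵢ)². (This is the coordinate form, in a frame diagonalizing the Weingarten map h = diag(κ), of the paper's inequality (f^{ik} b^{jl} − f^{ij} f^{kl}/f) η_{ij} η_{kl} ≥ 0, where b = diag(1/κᵢ); note f(κ) = ∑ᵢ κᵢ ∂ᵢf(κ) > 0 by Euler's identity.) -/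
/-! By Euler's identity `f κ = ∑ᵢ ∂ᵢf κᵢ`, the diagonal part of the claim is the Cauchy–Schwarz
inequality `(∑ᵢ ∂ᵢf ηᵢᵢ)² ≤ (∑ᵢ ∂ᵢf κᵢ) (∑ᵢ ∂ᵢf ηᵢᵢ² / κᵢ)` with weights `∂ᵢf > 0`; the
off-diagonal terms of the right-hand side are nonnegative. -/

open Finset

theorem fderiv_apply_self_of_homogeneous {E F : Type*} [NormedAddCommGroup E] [NormedSpace ℝ E]
    [NormedAddCommGroup F] [NormedSpace ℝ F] {f : E → F} {x : E} (hf : DifferentiableAt ℝ f x)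
    (hhom : ∀ t : ℝ, 0 < t → f (t • x) = t • f x) : fderiv ℝ f x x = f x := by
  have hray : HasDerivAt (fun t : ℝ => f (t • x)) (fderiv ℝ f x x) 1 := by
    have hline : HasDerivAt (fun t : ℝ => t • x) x 1 := by
      simpa using (hasDerivAt_id (1 : ℝ)).smul_const x
    have hf' : HasFDerivAt f (fderiv ℝ f x) ((1 : ℝ) • x) := by
      rw [one_smul]
      exact hf.hasFDerivAt
    exact hf'.comp_hasDerivAt 1 hline
  have hscale : HasDerivAt (fun t : ℝ => t • f x) (f x) 1 := by
    simpa using (hasDerivAt_id (1 : ℝ)).smul_const (f x)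
  have heq : (fun t : ℝ => f (t • x)) =ᶠ[nhds 1] fun t => t • f x :=
    Filter.eventually_of_mem (lt_mem_nhds one_pos) hhom
  exact (hray.congr_of_eventuallyEq heq.symm).unique hscale

theorem ContinuousLinearMap.apply_eq_sum_mul_apply_single {ι R : Type*} [Fintype ι] [DecidableEq ι]
    [CommSemiring R] [TopologicalSpace R] (L : (ι → R) →L[R] R) (x : ι → R) :
    L x = ∑ i, x i * L (Pi.single i 1) := by
  conv_lhs => rw [← Finset.univ_sum_single x, map_sum]
  refine Finset.sum_congr rfl fun i _ => ?_
  rw [← smul_eq_mul, ← map_smul, ← Pi.single_smul', smul_eq_mul, mul_one]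

theorem sq_sum_mul_le_sum_mul_mul_sum_div {ι R : Type*} [Field R] [LinearOrder R]
    [IsStrictOrderedRing R] (s : Finset ι) {a w : ι → R} (x : ι → R)
    (ha : ∀ i ∈ s, 0 ≤ a i) (hw : ∀ i ∈ s, 0 < w i) :
    (∑ i ∈ s, a i * x i) ^ 2 ≤ (∑ i ∈ s, a i * w i) * ∑ i ∈ s, a i / w i * x i ^ 2 := by
  refine sum_sq_le_sum_mul_sum_of_sq_le_mul s (fun i hi => mul_nonneg (ha i hi) (hw i hi).le)
    (fun i hi => mul_nonneg (div_nonneg (ha i hi) (hw i hi).le) (sq_nonneg _)) fun i hi => ?_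
  have := (hw i hi).ne'
  field_simp
  rfl

theorem stmt_0_general (n : ℕ) (f : (Fin n → ℝ) → ℝ)
    (hdiff : ∀ κ : Fin n → ℝ, (∀ i, 0 < κ i) → DifferentiableAt ℝ f κ)
    (hhom : ∀ t : ℝ, 0 < t → ∀ κ : Fin n → ℝ, (∀ i, 0 < κ i) → f (t • κ) = t * f κ)
    (hmono : ∀ κ : Fin n → ℝ, (∀ i, 0 < κ i) → ∀ i, 0 < fderiv ℝ f κ (Pi.single i 1))
    (κ : Fin n → ℝ) (hκ : ∀ i, 0 < κ i)
    (η : Matrix (Fin n) (Fin n) ℝ) :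
    (∑ i, fderiv ℝ f κ (Pi.single i 1) * η i i) ^ 2 ≤
      f κ * ∑ i, ∑ j, (fderiv ℝ f κ (Pi.single i 1) / κ j) * (η i j) ^ 2 := by
  set F : Fin n → ℝ := fun i => fderiv ℝ f κ (Pi.single i 1)
  have hF : ∀ i, 0 < F i := hmono κ hκ
  have hEuler : f κ = ∑ i, F i * κ i := by
    rw [← fderiv_apply_self_of_homogeneous (hdiff κ hκ) fun t ht => hhom t ht κ hκ,
      ContinuousLinearMap.apply_eq_sum_mul_apply_single]
    exact sum_congr rfl fun i _ => mul_comm _ _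
  have hf : 0 ≤ f κ := hEuler ▸ sum_nonneg fun i _ => (mul_pos (hF i) (hκ i)).le
  calc (∑ i, F i * η i i) ^ 2
      ≤ (∑ i, F i * κ i) * ∑ i, F i / κ i * η i i ^ 2 :=
        sq_sum_mul_le_sum_mul_mul_sum_div _ _ (fun i _ => (hF i).le) fun i _ => hκ i
    _ ≤ f κ * ∑ i, ∑ j, F i / κ j * η i j ^ 2 := by
        rw [← hEuler]
        gcongr with i
        exact single_le_sum (f := fun j => F i / κ j * η i j ^ 2)
          (fun j _ => mul_nonneg (div_pos (hF i) (hκ j)).le (sq_nonneg _)) (mem_univ i)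

theorem stmt_0 (n : ℕ) (hn : 1 ≤ n) (f : (Fin n → ℝ) → ℝ)
    (hdiff : ∀ κ : Fin n → ℝ, (∀ i, 0 < κ i) → DifferentiableAt ℝ f κ)
    (hhom : ∀ t : ℝ, 0 < t → ∀ κ : Fin n → ℝ, (∀ i, 0 < κ i) → f (t • κ) = t * f κ)
    (hmono : ∀ κ : Fin n → ℝ, (∀ i, 0 < κ i) → ∀ i, 0 < fderiv ℝ f κ (Pi.single i 1))
    (κ : Fin n → ℝ) (hκ : ∀ i, 0 < κ i)
    (η : Matrix (Fin n) (Fin n) ℝ) (hη : η.IsSymm) :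
    (∑ i, fderiv ℝ f κ (Pi.single i 1) * η i i) ^ 2 ≤
      f κ * ∑ i, ∑ j, (fderiv ℝ f κ (Pi.single i 1) / κ j) * (η i j) ^ 2 :=
  stmt_0_general n f hdiff hhom hmono κ hκ η
end

section
/- Let A and M be real symmetric n×n matrices such that A is positive definite, M is positive semidefinite, and A·M = M·A. Then for every real symmetric n×n matrix η one has tr(M·A) · tr(M · η · A⁻¹ · η) ≥ (tr(M·η))². (This is the invariant matrix form of the paper's inequality (f^{ik} b^{jl} − f^{ij} f^{kl}/f) η_{ij} η_{kl} ≥ 0, with A the second fundamental form, b = A⁻¹, M = (f^{ij}) the derivative of a monotone 1-homogeneous curvature function, and f = tr(M·A) by Euler's identity.) -/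
/-!
Writing `S = √M`, the trace `tr (M X Q Yᵀ) = tr ((S X) Q (S Y)ᵀ)` is the inner product of `S Y`
and `S X` for the positive semidefinite weight `Q`, so it satisfies Cauchy–Schwarz. Taking
`Q = A⁻¹`, `X = A` and `Y = η`, the factors `A A⁻¹` cancel and the three traces become
`tr (M η)`, `tr (M A)` and `tr (M η A⁻¹ η)`.
-/

open scoped MatrixOrder

namespace Matrix

variable {n : Type*} [Fintype n]

theorem trace_mul_mul_transpose_sq_le {Q : Matrix n n ℝ} (hQ : Q.PosSemidef)
    (X Y : Matrix n n ℝ) :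
    (X * Q * Yᵀ).trace ^ 2 ≤ (X * Q * Xᵀ).trace * (Y * Q * Yᵀ).trace := by
  -- `Q.toMatrixInnerProductSpace` has `⟪Y, X⟫ = tr (X Q Yᵀ)`.
  rw [sq, mul_comm (X * Q * Xᵀ).trace]
  exact @real_inner_mul_inner_self_le _ (Q.toMatrixSeminormedAddCommGroup hQ)
    (Q.toMatrixInnerProductSpace hQ) Y X

theorem trace_mul_mul_mul_transpose_sq_le {P Q : Matrix n n ℝ} (hP : P.PosSemidef)
    (hQ : Q.PosSemidef) (X Y : Matrix n n ℝ) :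
    (P * X * Q * Yᵀ).trace ^ 2 ≤ (P * X * Q * Xᵀ).trace * (P * Y * Q * Yᵀ).trace := by
  classical
  set S := CFC.sqrt P
  have hS : Sᵀ = S := by
    rw [← conjTranspose_eq_transpose_of_trivial]
    exact (nonneg_iff_posSemidef.mp (CFC.sqrt_nonneg P)).1
  have hSS : S * S = P := CFC.sqrt_mul_sqrt_self P hP.nonneg
  have h_trace (Z W : Matrix n n ℝ) :
      (P * Z * Q * Wᵀ).trace = (S * Z * Q * (S * W)ᵀ).trace := by
    rw [transpose_mul, hS, ← hSS, ← Matrix.mul_assoc, trace_mul_comm _ S]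
    simp only [Matrix.mul_assoc]
  simpa only [h_trace] using trace_mul_mul_transpose_sq_le hQ (S * X) (S * Y)

end Matrix

theorem stmt_1_general (n : ℕ) (A M : Matrix (Fin n) (Fin n) ℝ)
    (hA : A.IsSymm)
    (hApd : A.PosDef) (hMpsd : M.PosSemidef)
    (η : Matrix (Fin n) (Fin n) ℝ) (hη : η.IsSymm) :
    ((M * η).trace) ^ 2 ≤ (M * A).trace * (M * η * A⁻¹ * η).trace := by
  have h_det : IsUnit A.det := (Matrix.isUnit_iff_isUnit_det A).mp hApd.isUnit
  have h := Matrix.trace_mul_mul_mul_transpose_sq_le hMpsd hApd.inv.posSemidef A η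
  rwa [hA.eq, hη.eq, mul_assoc M A, Matrix.mul_nonsing_inv A h_det, mul_one] at h

theorem stmt_1 (n : ℕ) (A M : Matrix (Fin n) (Fin n) ℝ)
    (hA : A.IsSymm) (hM : M.IsSymm)
    (hApd : A.PosDef) (hMpsd : M.PosSemidef)
    (hcomm : A * M = M * A)
    (η : Matrix (Fin n) (Fin n) ℝ) (hη : η.IsSymm) :
    ((M * η).trace) ^ 2 ≤ (M * A).trace * (M * η * A⁻¹ * η).trace :=
  stmt_1_general n A M hA hApd hMpsd η hη
end

section
/- Let n ≥ 1, let f : ℝⁿ → ℝ be differentiable on the open positive cone Γ₊, positively 1-homogeneous on Γ₊, with all partial derivatives ∂ᵢf(κ) > 0 on Γ₊, let 0 < p ≤ 1 and set F = f^p on Γ₊. Then for every κ ∈ Γ₊ and every symmetric real n×n matrix η one has p · F(κ) · ∑_{i,j} (∂ᵢF(κ)/κⱼ) ηᵢⱼ² ≥ (∑ᵢ ∂ᵢF(κ) ηᵢᵢ)². (This is the coordinate form, in a frame diagonalizing the Weingarten map, of the paper's inequality F^{ik} b^{jl} η_{ij} η_{kl} ≥ (1/p) F^{−1} (F^{ij}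 η_{ij})² for F = f^p.) -/
theorem stmt_4 (n : ℕ) (hn : 1 ≤ n) (f : (Fin n → ℝ) → ℝ)
    (hdiff : ∀ κ : Fin n → ℝ, (∀ i, 0 < κ i) → DifferentiableAt ℝ f κ)
    (hhom : ∀ t : ℝ, 0 < t → ∀ κ : Fin n → ℝ, (∀ i, 0 < κ i) → f (t • κ) = t * f κ)
    (hmono : ∀ κ : Fin n → ℝ, (∀ i, 0 < κ i) → ∀ i, 0 < fderiv ℝ f κ (Pi.single i 1))
    (p : ℝ) (hp : 0 < p) (hp1 : p ≤ 1)
    (F : (Fin n → ℝ) → ℝ) (hF : F = fun κ => f κ ^ p)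
    (κ : Fin n → ℝ) (hκ : ∀ i, 0 < κ i)
    (η : Matrix (Fin n) (Fin n) ℝ) (hη : η.IsSymm) :
    (∑ i, fderiv ℝ F κ (Pi.single i 1) * η i i) ^ 2 ≤
      p * F κ * ∑ i, ∑ j, (fderiv ℝ F κ (Pi.single i 1) / κ j) * (η i j) ^ 2 := by
  have hne : Nonempty (Fin n) := ⟨⟨0, hn⟩⟩
  have hdf := hdiff κ hκ
  -- Euler identity
  have hc : HasDerivAt (fun t : ℝ => t • κ) κ 1 := by
    simpa using (hasDerivAt_id (1:ℝ)).smul_const κ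
  have hcomp : HasDerivAt (fun t : ℝ => f (t • κ)) (fderiv ℝ f κ κ) 1 := by
    have hdf1 : HasFDerivAt f (fderiv ℝ f κ) ((1:ℝ) • κ) := by
      rw [one_smul]; exact hdf.hasFDerivAt
    exact hdf1.comp_hasDerivAt 1 hc
  have heq : (fun t : ℝ => f (t • κ)) =ᶠ[nhds 1] fun t => t * f κ := by
    filter_upwards [eventually_gt_nhds (by norm_num : (0:ℝ) < 1)] with t ht
    exact hhom t ht κ hκ
  have hlin : HasDerivAt (fun t : ℝ => t * f κ) (f κ) 1 := by
    simpa using (hasDerivAt_id (1:ℝ)).mul_const (f κ)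
  have hcomp' : HasDerivAt (fun t : ℝ => f (t • κ)) (f κ) 1 :=
    hlin.congr_of_eventuallyEq heq
  have heuler : fderiv ℝ f κ κ = f κ := by
    have := hcomp.unique hcomp'
    exact this
  have hκsum : κ = ∑ i, κ i • (Pi.single i 1 : Fin n → ℝ) := by
    ext j; simp [Pi.single_apply, eq_comm]
  have heuler2 : ∑ i, κ i * fderiv ℝ f κ (Pi.single i 1) = f κ := by
    rw [← heuler]
    have h1 : (fderiv ℝ f κ) κ = (fderiv ℝ f κ) (∑ i, κ i • (Pi.single i 1 : Fin n → ℝ)) := by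
      rw [← hκsum]
    rw [h1, map_sum]
    simp [smul_eq_mul]
  have hfpos : 0 < f κ := by
    rw [← heuler2]
    exact Finset.sum_pos (fun i _ => mul_pos (hκ i) (hmono κ hκ i)) Finset.univ_nonempty
  -- derivative of F
  have hFd : HasFDerivAt F ((p * f κ ^ (p - 1)) • fderiv ℝ f κ) κ := by
    rw [hF]
    exact (hdf.hasFDerivAt).rpow_const (Or.inl hfpos.ne')
  have hFderiv : ∀ i, fderiv ℝ F κ (Pi.single i 1)
      = p * f κ ^ (p - 1) * fderiv ℝ f κ (Pi.single i 1) := by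
    intro i; rw [hFd.fderiv]; simp [smul_eq_mul]
  set a : Fin n → ℝ := fun i => fderiv ℝ F κ (Pi.single i 1) with ha
  have hapos : ∀ i, 0 < a i := fun i => by
    show 0 < fderiv ℝ F κ (Pi.single i 1)
    rw [hFderiv i]
    exact mul_pos (mul_pos hp (Real.rpow_pos_of_pos hfpos _)) (hmono κ hκ i)
  have hsum : ∑ i, κ i * a i = p * F κ := by
    have h1 : ∀ i : Fin n, κ i * a i
        = p * f κ ^ (p - 1) * (κ i * fderiv ℝ f κ (Pi.single i 1)) := by
      intro i
      rw [show a i = p * f κ ^ (p - 1) * fderiv ℝ f κ (Pi.single i 1) from hFderiv i]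
      ring
    rw [Finset.sum_congr rfl fun i _ => h1 i, ← Finset.mul_sum, heuler2]
    have h2 : f κ ^ (p - 1) * f κ = f κ ^ p := by
      nth_rewrite 2 [← Real.rpow_one (f κ)]
      rw [← Real.rpow_add hfpos]
      norm_num
    rw [hF]
    show p * f κ ^ (p - 1) * f κ = p * f κ ^ p
    rw [mul_assoc, h2]
  -- Cauchy-Schwarz
  have hCS : (∑ i, a i * η i i) ^ 2 ≤ (∑ i, κ i * a i) * ∑ i, (a i / κ i) * η i i ^ 2 := by
    have := Finset.sum_mul_sq_le_sq_mul_sq Finset.univ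
      (fun i => Real.sqrt (κ i * a i)) (fun i => Real.sqrt (a i / κ i) * η i i)
    have e1 : ∀ i : Fin n, Real.sqrt (κ i * a i) * (Real.sqrt (a i / κ i) * η i i)
        = a i * η i i := by
      intro i
      rw [← mul_assoc, ← Real.sqrt_mul (mul_pos (hκ i) (hapos i)).le]
      have : κ i * a i * (a i / κ i) = a i ^ 2 := by
        field_simp [(hκ i).ne']
      rw [this, Real.sqrt_sq (hapos i).le]
    have e2 : ∀ i : Fin n, Real.sqrt (κ i * a i) ^ 2 = κ i * a i := by
      intro i; exact Real.sq_sqrt (mul_pos (hκ i) (hapos i)).le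
    have e3 : ∀ i : Fin n, (Real.sqrt (a i / κ i) * η i i) ^ 2 = (a i / κ i) * η i i ^ 2 := by
      intro i; rw [mul_pow, Real.sq_sqrt (div_nonneg (hapos i).le (hκ i).le)]
    calc (∑ i, a i * η i i) ^ 2
        = (∑ i, Real.sqrt (κ i * a i) * (Real.sqrt (a i / κ i) * η i i)) ^ 2 := by
          congr 1; exact (Finset.sum_congr rfl fun i _ => e1 i).symm
      _ ≤ (∑ i, Real.sqrt (κ i * a i) ^ 2) * ∑ i, (Real.sqrt (a i / κ i) * η i i) ^ 2 := this
      _ = (∑ i, κ i * a i) * ∑ i, (a i / κ i) * η i i ^ 2 := by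
          congr 1
          · exact Finset.sum_congr rfl fun i _ => e2 i
          · exact Finset.sum_congr rfl fun i _ => e3 i
  have hdiag : ∑ i, (a i / κ i) * η i i ^ 2 ≤ ∑ i, ∑ j, (a i / κ j) * η i j ^ 2 := by
    apply Finset.sum_le_sum
    intro i _
    exact Finset.single_le_sum (f := fun j => (a i / κ j) * η i j ^ 2)
      (fun j _ => mul_nonneg (div_nonneg (hapos i).le (hκ j).le) (sq_nonneg _))
      (Finset.mem_univ i)
  have hFpos : 0 < F κ := by rw [hF]; exact Real.rpow_pos_of_pos hfpos p
  calc (∑ i, a i * η i i) ^ 2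
      ≤ (∑ i, κ i * a i) * ∑ i, (a i / κ i) * η i i ^ 2 := hCS
    _ ≤ (∑ i, κ i * a i) * ∑ i, ∑ j, (a i / κ j) * η i j ^ 2 := by
        apply mul_le_mul_of_nonneg_left hdiag
        exact Finset.sum_nonneg fun i _ => (mul_pos (hκ i) (hapos i)).le
    _ = p * F κ * ∑ i, ∑ j, (a i / κ j) * η i j ^ 2 := by rw [hsum]
end

section
/- Let n ≥ 1, let f : ℝⁿ → ℝ be differentiable on the open positive cone Γ₊, positively 1-homogeneous on Γ₊, with all partial derivatives ∂ᵢf(κ) > 0 on Γ₊, let 0 < p ≤ 1, set F = f^p and δ = p/(p+1). Then for every κ ∈ Γ₊ and every symmetric real n×n matrix η one has 2·∑_{i,j} (∂ᵢF(κ)/κⱼ) ηᵢⱼ² − (1/(δ·F(κ)))·(∑ᵢ ∂ᵢF(κ) ηᵢᵢ)² ≥ ((1−p)/p)·F(κ)^{−1}·(∑ᵢ ∂ᵢF(κ) ηᵢᵢ)². (This is the coordinate form of the paper's inequality (2 b^{il} F^{jk} − F^{ij} F^{kl}/(δF)) η_{ij} η_{kl} ≥ ((1−p)/p) F^{−1}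 (F^{ij} η_{ij})² with δ = p/(p+1).) -/
theorem stmt_5 (n : ℕ) (hn : 1 ≤ n) (f : (Fin n → ℝ) → ℝ)
    (hdiff : ∀ κ : Fin n → ℝ, (∀ i, 0 < κ i) → DifferentiableAt ℝ f κ)
    (hhom : ∀ t : ℝ, 0 < t → ∀ κ : Fin n → ℝ, (∀ i, 0 < κ i) → f (t • κ) = t * f κ)
    (hmono : ∀ κ : Fin n → ℝ, (∀ i, 0 < κ i) → ∀ i, 0 < fderiv ℝ f κ (Pi.single i 1))
    (p : ℝ) (hp : 0 < p) (hp1 : p ≤ 1)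
    (F : (Fin n → ℝ) → ℝ) (hF : F = fun κ => f κ ^ p)
    (δ : ℝ) (hδ : δ = p / (p + 1))
    (κ : Fin n → ℝ) (hκ : ∀ i, 0 < κ i)
    (η : Matrix (Fin n) (Fin n) ℝ) (hη : η.IsSymm) :
    ((1 - p) / p) * (F κ)⁻¹ * (∑ i, fderiv ℝ F κ (Pi.single i 1) * η i i) ^ 2 ≤
      2 * (∑ i, ∑ j, (fderiv ℝ F κ (Pi.single i 1) / κ j) * (η i j) ^ 2) -
        (1 / (δ * F κ)) * (∑ i, fderiv ℝ F κ (Pi.single i 1) * η i i) ^ 2 := by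
  have hne : Nonempty (Fin n) := Fin.pos_iff_nonempty.mp hn
  subst hF hδ
  set L := fderiv ℝ f κ with hL
  have hfd : HasFDerivAt f L κ := (hdiff κ hκ).hasFDerivAt
  have hLpos : ∀ i, 0 < L (Pi.single i 1) := hmono κ hκ
  -- κ as a sum of singles
  have hκsum : κ = ∑ i, κ i • (Pi.single i (1:ℝ) : Fin n → ℝ) := by
    funext j
    simp [Pi.single_apply, Finset.sum_apply, mul_ite]
  have hLκ : L κ = ∑ i, κ i * L (Pi.single i 1) := by
    conv_lhs => rw [hκsum]
    simp [map_sum]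
  -- Euler's identity
  have hEuler : L κ = f κ := by
    have h1 : HasDerivAt (fun t : ℝ => t • κ) κ 1 := by
      simpa using (hasDerivAt_id (1:ℝ)).smul_const κ
    have hfd1 : HasFDerivAt f L ((1:ℝ) • κ) := by rwa [one_smul]
    have h2 : HasDerivAt (fun t : ℝ => f (t • κ)) (L κ) 1 :=
      hfd1.comp_hasDerivAt 1 h1
    have hev : (fun t : ℝ => t * f κ) =ᶠ[nhds (1:ℝ)] fun t => f (t • κ) := by
      filter_upwards [eventually_gt_nhds (show (0:ℝ) < 1 by norm_num)] with t ht
      rw [hhom t ht κ hκ]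
    have h3 : HasDerivAt (fun t : ℝ => t * f κ) (L κ) 1 :=
      h2.congr_of_eventuallyEq hev
    exact h3.unique (hasDerivAt_mul_const (f κ))
  have hfpos : 0 < f κ := by
    rw [← hEuler, hLκ]
    exact Finset.sum_pos (fun i _ => mul_pos (hκ i) (hLpos i)) Finset.univ_nonempty
  -- derivative of F
  have hFd : HasFDerivAt (fun κ => f κ ^ p) ((p * f κ ^ (p - 1)) • L) κ :=
    hfd.rpow_const (Or.inl hfpos.ne')
  have hGd : fderiv ℝ (fun κ => f κ ^ p) κ = (p * f κ ^ (p - 1)) • L := hFd.fderiv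
  set c := p * f κ ^ (p - 1) with hc
  have hcpos : 0 < c := mul_pos hp (Real.rpow_pos_of_pos hfpos _)
  set G := fun i => fderiv ℝ (fun κ => f κ ^ p) κ (Pi.single i 1) with hGdef
  have hG : ∀ i, G i = c * L (Pi.single i 1) := by
    intro i; simp [hGdef, hGd, hc]
  have hGpos : ∀ i, 0 < G i := fun i => (hG i) ▸ mul_pos hcpos (hLpos i)
  set FK := f κ ^ p with hFK
  have hFKpos : 0 < FK := Real.rpow_pos_of_pos hfpos _
  -- ∑ G i * κ i = p * FK
  have hGκ : ∑ i, G i * κ i = p * FK := by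
    have : ∑ i, G i * κ i = c * L κ := by
      rw [hLκ, Finset.mul_sum]
      exact Finset.sum_congr rfl fun i _ => by rw [hG i]; ring
    rw [this, hEuler, hc, hFK]
    have : f κ ^ (p - 1) * f κ = f κ ^ p := by
      rw [← Real.rpow_add_one hfpos.ne' (p - 1)]; ring_nf
    nlinarith [this]
  set S := ∑ i, G i * η i i with hS
  set T := ∑ i, ∑ j, (G i / κ j) * (η i j) ^ 2 with hT
  -- Cauchy-Schwarz
  have hCS : S ^ 2 ≤ (∑ i, (G i / κ i) * η i i ^ 2) * (p * FK) := by
    rw [← hGκ]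
    have := Finset.sum_mul_sq_le_sq_mul_sq Finset.univ
      (fun i => Real.sqrt (G i / κ i) * η i i) (fun i => Real.sqrt (G i * κ i))
    have e1 : ∀ i : Fin n, (Real.sqrt (G i / κ i) * η i i) * Real.sqrt (G i * κ i)
        = G i * η i i := by
      intro i
      rw [mul_comm (Real.sqrt (G i / κ i)) (η i i), mul_assoc,
        ← Real.sqrt_mul (div_nonneg (hGpos i).le (hκ i).le)]
      have : G i / κ i * (G i * κ i) = (G i) ^ 2 := by
        field_simp [(hκ i).ne']
      rw [this, Real.sqrt_sq (hGpos i).le]; ring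
    have e2 : ∀ i : Fin n, (Real.sqrt (G i / κ i) * η i i) ^ 2
        = (G i / κ i) * η i i ^ 2 := by
      intro i; rw [mul_pow, Real.sq_sqrt (div_nonneg (hGpos i).le (hκ i).le)]
    have e3 : ∀ i : Fin n, (Real.sqrt (G i * κ i)) ^ 2 = G i * κ i := by
      intro i; exact Real.sq_sqrt (mul_nonneg (hGpos i).le (hκ i).le)
    calc S ^ 2 = (∑ i, (Real.sqrt (G i / κ i) * η i i) * Real.sqrt (G i * κ i)) ^ 2 := by
          rw [hS]; congr 1; exact Finset.sum_congr rfl fun i _ => (e1 i).symm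
      _ ≤ (∑ i, (Real.sqrt (G i / κ i) * η i i) ^ 2) * ∑ i, (Real.sqrt (G i * κ i)) ^ 2 :=
          this
      _ = (∑ i, (G i / κ i) * η i i ^ 2) * ∑ i, G i * κ i := by
          rw [Finset.sum_congr rfl fun i _ => e2 i, Finset.sum_congr rfl fun i _ => e3 i]
  -- diagonal sum ≤ full sum
  have hdiag : ∑ i, (G i / κ i) * η i i ^ 2 ≤ T := by
    rw [hT]
    refine Finset.sum_le_sum fun i _ => ?_
    exact Finset.single_le_sum (f := fun j => (G i / κ j) * η i j ^ 2)
      (fun j _ => mul_nonneg (div_nonneg (hGpos i).le (hκ j).le) (sq_nonneg _)) (Finset.mem_univ i)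
  have key : S ^ 2 ≤ (p * FK) * T := by
    calc S ^ 2 ≤ (∑ i, (G i / κ i) * η i i ^ 2) * (p * FK) := hCS
      _ ≤ T * (p * FK) := by
          apply mul_le_mul_of_nonneg_right hdiag (mul_pos hp hFKpos).le
      _ = (p * FK) * T := mul_comm _ _
  -- final algebra
  rw [← sub_nonneg]
  have hδFK : 1 / (p / (p + 1) * FK) = (p + 1) / (p * FK) := by
    rw [div_mul_eq_mul_div, one_div, inv_div]
  have expand : 2 * T - 1 / (p / (p + 1) * FK) * S ^ 2
      - (1 - p) / p * FK⁻¹ * S ^ 2 = 2 / (p * FK) * ((p * FK) * T - S ^ 2) := by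
    rw [hδFK]
    have hp1' : p + 1 ≠ 0 := by positivity
    field_simp [hp.ne', hFKpos.ne']
    ring
  rw [expand]
  apply mul_nonneg (div_nonneg (by norm_num) (mul_pos hp hFKpos).le)
  linarith
end

section
/- Let n ≥ 1, let 0 < p ≤ 1, let κ ∈ ℝⁿ have all entries positive and set H = ∑ᵢ κᵢ. Then for every η ∈ ℝⁿ one has ∑ᵢ ((p+1)·H^p/κᵢ² − 2p·H^{p−1}/κᵢ)·ηᵢ² ≥ (1−p)·H^{p−2}·∑ᵢ ηᵢ². (This is the coordinate form of the paper's estimate (F'H + F) b^{ir} b^j_r ∇ᵢF ∇ⱼF − 2F' b^{ij} ∇ᵢF ∇ⱼF ≥ (1−p)·(F/(F'H²))·F^{ij} ∇ᵢF ∇ⱼF for F(H) = H^p, using κᵢ ≤ H.) -/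
theorem stmt_7 (n : ℕ) (hn : 1 ≤ n) (p : ℝ) (hp : 0 < p) (hp1 : p ≤ 1)
    (κ : Fin n → ℝ) (hκ : ∀ i, 0 < κ i) (H : ℝ) (hH : H = ∑ i, κ i)
    (η : Fin n → ℝ) :
    (1 - p) * H ^ (p - 2) * ∑ i, (η i) ^ 2 ≤
      ∑ i, ((p + 1) * H ^ p / (κ i) ^ 2 - 2 * p * H ^ (p - 1) / κ i) * (η i) ^ 2 := by
  have hne : Nonempty (Fin n) := ⟨⟨0, hn⟩⟩
  have hHpos : 0 < H := by
    rw [hH]; exact Finset.sum_pos (fun i _ => hκ i) Finset.univ_nonempty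
  have hT : 0 < H ^ (p - 2) := Real.rpow_pos_of_pos hHpos _
  rw [mul_comm ((1 - p) * H ^ (p - 2)), Finset.sum_mul]
  apply Finset.sum_le_sum
  intro i _
  have hκi := hκ i
  have hκH : κ i ≤ H := by
    rw [hH]; exact Finset.single_le_sum (fun j _ => (hκ j).le) (Finset.mem_univ i)
  have h2 : H ^ p = H ^ (p - 2) * H ^ 2 := by
    rw [← Real.rpow_natCast H 2, ← Real.rpow_add hHpos]; norm_num
  have h1 : H ^ (p - 1) = H ^ (p - 2) * H := by
    rw [show p - 1 = p - 2 + 1 by ring, Real.rpow_add hHpos, Real.rpow_one]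
  rw [h2, h1, mul_comm (η i ^ 2)]
  have key : (1 - p) * κ i ^ 2 ≤ (p + 1) * H ^ 2 - 2 * p * H * κ i := by
    nlinarith [mul_nonneg (sub_nonneg.2 hκH)
      (by nlinarith : (0:ℝ) ≤ (p + 1) * H - (p - 1) * κ i)]
  have hrw : (p + 1) * (H ^ (p - 2) * H ^ 2) / κ i ^ 2 -
      2 * p * (H ^ (p - 2) * H) / κ i =
      H ^ (p - 2) * ((p + 1) * H ^ 2 - 2 * p * H * κ i) / κ i ^ 2 := by
    field_simp
  rw [hrw]
  apply mul_le_mul_of_nonneg_right _ (sq_nonneg _)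
  rw [le_div_iff₀ (by positivity)]
  nlinarith [mul_le_mul_of_nonneg_left key hT.le]
end

section
/- Let n ≥ 1 be an integer, let (n+1)/(2n) ≤ p ≤ 1, set δ = p/(p+1), c₀ = p·(n − 1/(2p−1)), F(H) = H^p for H > 0, and ζ(s) = c₀·s^{2−1/p} for s > 0. Then for every H > 0: ζ(F(H))²/(δ·F(H)) − 2n·(F''(H)·F(H)/F'(H))·ζ(F(H)) + n·(ζ'(F(H))·F(H) − ζ(F(H)))·F'(H) ≥ 0, where F', F'' are derivatives with respect to H and ζ' is the derivative of ζ with respect to its argument. -/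
/-!
All three terms are multiples of `H ^ (3p - 2)`: the exponent `2 - 1/p` of `ζ` is chosen so that
`ζ (F H) = c₀ H ^ (2p - 1)`, and then the expression collapses to
`H ^ (3p - 2) * (c₀² / δ + n (1 - p) c₀)`. Since `p ≤ 1` the second summand has the sign of `c₀`,
and `c₀ ≥ 0` is exactly the lower bound `p ≥ (n + 1) / (2n)`, i.e. `n (2p - 1) ≥ 1`.
-/

lemma deriv_deriv_rpow_const (p x : ℝ) :
    deriv (deriv fun x : ℝ => x ^ p) x = p * (p - 1) * x ^ (p - 2) := by
  rw [Real.deriv_rpow_const', deriv_const_mul_field, Real.deriv_rpow_const]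
  ring_nf

lemma deriv_const_mul_rpow_const (c q s : ℝ) :
    deriv (fun s : ℝ => c * s ^ q) s = c * q * s ^ (q - 1) := by
  rw [deriv_const_mul_field, Real.deriv_rpow_const, mul_assoc]

lemma harnack_rpow_eq (n c₀ δ p H : ℝ) (hp : p ≠ 0) (hH : 0 < H) (F ζ : ℝ → ℝ)
    (hF : F = fun H : ℝ => H ^ p) (hζ : ζ = fun s : ℝ => c₀ * s ^ (2 - 1 / p)) :
    (ζ (F H)) ^ 2 / (δ * F H)
        - 2 * n * (deriv (deriv F) H * F H / deriv F H) * ζ (F H)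
        + n * (deriv ζ (F H) * F H - ζ (F H)) * deriv F H
      = H ^ (3 * p - 2) * (c₀ ^ 2 / δ + n * (1 - p) * c₀) := by
  subst hF hζ
  simp only [deriv_deriv_rpow_const, deriv_const_mul_rpow_const, Real.deriv_rpow_const]
  have hH0 : H ≠ 0 := hH.ne'
  have hHp : H ^ p ≠ 0 := (Real.rpow_pos_of_pos hH p).ne'
  have hζF : (H ^ p) ^ (2 - 1 / p) = H ^ p * H ^ p / H := by
    rw [← Real.rpow_mul hH.le, show p * (2 - 1 / p) = p + p - 1 by field_simp; ring,
      Real.rpow_sub_one hH0, Real.rpow_add hH]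
  have hζ'F : (H ^ p) ^ (2 - 1 / p - 1) = H ^ p / H := by
    rw [← Real.rpow_mul hH.le, show p * (2 - 1 / p - 1) = p - 1 by field_simp; ring,
      Real.rpow_sub_one hH0]
  have hF' : H ^ (p - 1) = H ^ p / H := Real.rpow_sub_one hH0 p
  have hF'' : H ^ (p - 2) = H ^ p / H ^ 2 := by rw [Real.rpow_sub hH, Real.rpow_two]
  have hout : H ^ (3 * p - 2) = H ^ p * H ^ p * H ^ p / H ^ 2 := by
    rw [show 3 * p - 2 = p + p + p - 2 by ring, Real.rpow_sub hH, Real.rpow_add hH,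
      Real.rpow_add hH, Real.rpow_two]
  rw [hζF, hζ'F, hF', hF'', hout]
  field_simp
  ring

lemma one_le_mul_two_mul_sub_one {n p : ℝ} (hn : 0 < n) (hp : (n + 1) / (2 * n) ≤ p) :
    1 ≤ n * (2 * p - 1) := by
  rw [div_le_iff₀ (by positivity)] at hp
  linarith

lemma half_lt_of_add_one_div_two_mul_le {n p : ℝ} (hn : 0 < n) (hp : (n + 1) / (2 * n) ≤ p) :
    1 / 2 < p := by
  have h := pos_of_mul_pos_right (one_pos.trans_le (one_le_mul_two_mul_sub_one hn hp)) hn.le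
  linarith

lemma harnack_const_nonneg {n p : ℝ} (hn : 0 < n) (hp : (n + 1) / (2 * n) ≤ p) :
    0 ≤ p * (n - 1 / (2 * p - 1)) := by
  have hp' := half_lt_of_add_one_div_two_mul_le hn hp
  have : 1 / (2 * p - 1) ≤ n := by
    rw [div_le_iff₀ (by linarith)]
    exact one_le_mul_two_mul_sub_one hn hp
  exact mul_nonneg (by linarith) (by linarith)

theorem stmt_11 (n : ℕ) (hn : 1 ≤ n) (p : ℝ) (hp : (n + 1) / (2 * n) ≤ p) (hp1 : p ≤ 1)
    (δ : ℝ) (hδ : δ = p / (p + 1))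
    (c₀ : ℝ) (hc₀ : c₀ = p * (n - 1 / (2 * p - 1)))
    (F ζ : ℝ → ℝ) (hF : F = fun H : ℝ => H ^ p)
    (hζ : ζ = fun s : ℝ => c₀ * s ^ (2 - 1 / p))
    (H : ℝ) (hH : 0 < H) :
    0 ≤ (ζ (F H)) ^ 2 / (δ * F H)
        - 2 * n * (deriv (deriv F) H * F H / deriv F H) * ζ (F H)
        + n * (deriv ζ (F H) * F H - ζ (F H)) * deriv F H := by
  have hn' : (0 : ℝ) < n := by exact_mod_cast hn
  have hp0 : 0 < p := by linarith [half_lt_of_add_one_div_two_mul_le hn' hp]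
  have hδ0 : 0 ≤ δ := hδ ▸ div_nonneg hp0.le (by linarith)
  have hc₀0 : 0 ≤ c₀ := hc₀ ▸ harnack_const_nonneg hn' hp
  rw [harnack_rpow_eq n c₀ δ p H hp0.ne' hH F ζ hF hζ]
  exact mul_nonneg (by positivity) <| add_nonneg (div_nonneg (sq_nonneg c₀) hδ0) <|
    mul_nonneg (mul_nonneg hn'.le (sub_nonneg.2 hp1)) hc₀0
end
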